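/- Let b ∈ ℤ_p and n ∈ ℕ. If the p-adic valuation of the binomial coefficient C(b,n) is 0, then v_p(b) ≤ v_p(n). -/

import Mathlib

/-!
Writing `C(b,n)` as `Ring.choose b` in the binomial ring `ℤ_[p]`, the absorption identity
`n • C(b,n) = b * C(b-1,n-1)` together with `‖C(b-1,n-1)‖ ≤ 1` gives `‖n‖ * ‖C(b,n)‖ ≤ ‖b‖`,
so `‖n‖ ≤ ‖b‖` as soon as `C(b,n)` is a unit.
-/

open Finset

/-- The generalized binomial coefficient `C(b,n) = b(b-1)⋯(b-n+1)/n!`, computed in `ℚ_[p]`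
for a `p`-adic integer `b`. -/
noncomputable def padicChoose (p : ℕ) [Fact p.Prime] (b : ℤ_[p]) (n : ℕ) : ℚ_[p] :=
  (∏ k ∈ Finset.range n, ((b : ℚ_[p]) - (k : ℚ_[p]))) / (n.factorial : ℚ_[p])

theorem Ring.choose_eq_prod_range_div {R : Type*} [Field R] [CharZero R] (x : R) (n : ℕ) :
    Ring.choose x n = (∏ k ∈ range n, (x - k)) / n.factorial := by
  rw [Ring.choose_eq_smul, smul_eq_mul, inv_mul_eq_div, ← Polynomial.aeval_eq_smeval,
    Polynomial.aeval_def, Polynomial.eval₂_eq_eval_map, descPochhammer_map,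
    descPochhammer_eval_eq_prod_range]

namespace PadicInt

variable {p : ℕ} [Fact p.Prime]

theorem coe_choose (b : ℤ_[p]) (n : ℕ) :
    ((Ring.choose b n : ℤ_[p]) : ℚ_[p]) = Ring.choose (b : ℚ_[p]) n :=
  Ring.map_choose Coe.ringHom b n

theorem natCast_succ_mul_choose_succ (b : ℤ_[p]) (n : ℕ) :
    ((n + 1 : ℕ) : ℤ_[p]) * Ring.choose b (n + 1) = b * Ring.choose (b - 1) n := by
  simpa [nsmul_eq_mul] using Ring.choose_smul_choose b (Nat.le_add_left 1 n)

theorem norm_natCast_le_of_norm_choose_eq_one {b : ℤ_[p]} {n : ℕ}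
    (h : ‖Ring.choose b n‖ = 1) : ‖(n : ℤ_[p])‖ ≤ ‖b‖ := by
  obtain _ | n := n
  · simp
  have hnorm := congrArg norm (natCast_succ_mul_choose_succ b n)
  rw [norm_mul, norm_mul, h, mul_one] at hnorm
  exact hnorm ▸ mul_le_of_le_one_right (norm_nonneg b) (norm_le_one _)

end PadicInt

theorem padicChoose_eq_coe_choose (p : ℕ) [Fact p.Prime] (b : ℤ_[p]) (n : ℕ) :
    padicChoose p b n = ((Ring.choose b n : ℤ_[p]) : ℚ_[p]) := by
  rw [PadicInt.coe_choose, Ring.choose_eq_prod_range_div, padicChoose]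

/-- If the `p`-adic valuation of `C(b,n)` is `0` (i.e. `C(b,n)` is a `p`-adic unit), then
`v_p(b) ≤ v_p(n)`; equivalently, `‖n‖_p ≤ ‖b‖_p`. -/
theorem stmt_1 (p : ℕ) [Fact p.Prime] (b : ℤ_[p]) (n : ℕ)
    (h : ‖padicChoose p b n‖ = 1) :
    ‖(n : ℚ_[p])‖ ≤ ‖(b : ℚ_[p])‖ := by
  rw [padicChoose_eq_coe_choose, PadicInt.padic_norm_e_of_padicInt] at h
  exact_mod_cast PadicInt.norm_natCast_le_of_norm_choose_eq_one h
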